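/- arXiv:1512.08823 — 3 statements merged into one kernel-verified Lean document; each statement's English description precedes it below -/
import Mathlib

section
/- Let A = (Σ, Q, δ, I) be a top-down tree automaton, let ≼dw be the maximal downward simulation preorder and <dw = ≼dw ∖ (≼dw)⁻¹ its strict version, and let ⊆up(≼dw) be the upward trace inclusion induced by ≼dw. Then P(⊆up(≼dw), <dw) is good for pruning, i.e., L(Prune(A, P(⊆up(≼dw), <dw))) = L(A), where P(⊆up(≼dw), <dw) relates rules ⟨p,σ,r₁⋯rₙ⟩ and ⟨p′,σ,r′₁⋯r′ₙ⟩ iff p ⊆up(≼dw) p′, rᵢ ≼dw r′ᵢ for all i, and rᵢ <dw r′ᵢ for some i. -/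
/-- A tree over a ranked alphabet: a partial map from nodes (lists of child
indices) to symbols, with finite, prefix-closed domain respecting ranks. -/
structure RTree (α : Type) (rank : α → ℕ) where
  label : List ℕ → Option α
  finite : Set.Finite {v : List ℕ | label v ≠ none}
  prefixClosed : ∀ v i, label (v ++ [i]) ≠ none → ∃ a, label v = some a ∧ i < rank a

namespace RTree

variable {α : Type} {rank : α → ℕ}

/-- A tree is closed if every node has all the children prescribed by the rank
of its symbol. -/
def IsClosed (t : RTree α rank) : Prop :=
  ∀ v a, t.label v = some a → ∀ i, i < rank a → t.label (v ++ [i]) ≠ none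

/-- The domain of a run on `t`: the nodes of `t` together with all (possibly
dangling) children of nodes of `t`. -/
def inRunDom (t : RTree α rank) (v : List ℕ) : Prop :=
  t.label v ≠ none ∨ ∃ v' i a, v = v' ++ [i] ∧ t.label v' = some a ∧ i < rank a

/-- A leaf of `t`: a node of `t` with no children in `t`. -/
def IsLeaf (t : RTree α rank) (v : List ℕ) : Prop :=
  t.label v ≠ none ∧ ∀ i, t.label (v ++ [i]) = none

end RTree

/-- A (nondeterministic, top-down) tree automaton, with a distinguished final
state `top`; leaf rules have right-hand side `[top]`, and rules for symbols of
positive rank have right-hand side of length equal to the rank. -/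
structure TDTA (Q α : Type) (rank : α → ℕ) where
  top : Q
  init : Set Q
  delta : Set (Q × α × List Q)
  rank_ok : ∀ τ ∈ delta, (rank τ.2.1 = 0 → τ.2.2 = [top]) ∧
    (0 < rank τ.2.1 → τ.2.2.length = rank τ.2.1)

namespace TDTA

variable {Q α : Type} {rank : α → ℕ}

/-- The right-hand side that a run `π` must match at node `v` labelled `a`. -/
def rhsOf (A : TDTA Q α rank) (a : α) (π : List ℕ → Q) (v : List ℕ) : List Q :=
  if rank a = 0 then [A.top] else (List.range (rank a)).map fun i => π (v ++ [i])

/-- `π` is a run of `A` on the tree `t`. -/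
def IsRun (A : TDTA Q α rank) (t : RTree α rank) (π : List ℕ → Q) : Prop :=
  ∀ v a, t.label v = some a → (π v, a, A.rhsOf a π v) ∈ A.delta

/-- The downward language of a state: closed trees accepted from it. -/
def dlang (A : TDTA Q α rank) (q : Q) : Set (RTree α rank) :=
  {t | t.IsClosed ∧ ∃ π, A.IsRun t π ∧ π [] = q}

/-- The language of the automaton. -/
def lang (A : TDTA Q α rank) : Set (RTree α rank) :=
  {t | ∃ q ∈ A.init, t ∈ A.dlang q}

/-- Pruning: keep exactly the transitions that are maximal w.r.t. `P`. -/
def prune (A : TDTA Q α rank) (P : Q × α × List Q → Q × α × List Q → Prop) :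
    TDTA Q α rank where
  top := A.top
  init := A.init
  delta := {τ | τ ∈ A.delta ∧ ¬∃ τ' ∈ A.delta, P τ τ'}
  rank_ok := fun τ hτ => A.rank_ok τ hτ.1

/-- Downward trace inclusion `q ⊆dw r`. -/
def dwIncl (A : TDTA Q α rank) (q r : Q) : Prop :=
  ∀ t : RTree α rank, t.IsClosed → ∀ π, A.IsRun t π → π [] = q →
    ∃ π', A.IsRun t π' ∧ π' [] = r

/-- Upward trace inclusion `q ⊆up(R) r` induced by a relation `R`. -/
def upIncl (A : TDTA Q α rank) (R : Q → Q → Prop) (q r : Q) : Prop :=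
  (q = A.top → r = A.top) ∧
  ∀ (t : RTree α rank) (v : List ℕ), t.IsLeaf v →
    ∀ πq, A.IsRun t πq → πq v = q →
      ∃ πr, A.IsRun t πr ∧ πr v = r ∧
        (∀ v', v' <+: v → πq v' ∈ A.init → πr v' ∈ A.init) ∧
        ∀ v' x, v' <+: v → v' ≠ v → t.inRunDom (v' ++ [x]) → ¬(v' ++ [x]) <+: v →
          R (πq (v' ++ [x])) (πr (v' ++ [x]))

/-- `D` is a downward simulation on `A`. -/
def IsDwSim (A : TDTA Q α rank) (D : Q → Q → Prop) : Prop :=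
  ∀ q r, D q r → (q = A.top → r = A.top) ∧
    ∀ a qs, (q, a, qs) ∈ A.delta →
      ∃ rs, (r, a, rs) ∈ A.delta ∧ List.Forall₂ D qs rs

/-- The maximal downward simulation `≼dw` (the union of all downward
simulations). -/
def dwSim (A : TDTA Q α rank) (q r : Q) : Prop :=
  ∃ D, A.IsDwSim D ∧ D q r

/-- `U` is an upward simulation on `A` induced by `R`. -/
def IsUpSim (A : TDTA Q α rank) (R U : Q → Q → Prop) : Prop :=
  ∀ q r, U q r → (q = A.top → r = A.top) ∧ (q ∈ A.init → r ∈ A.init) ∧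
    ∀ q' a qs, (q', a, qs) ∈ A.delta → ∀ i : Fin qs.length, qs.get i = q →
      ∃ r' rs, ∃ hlen : rs.length = qs.length, (r', a, rs) ∈ A.delta ∧
        rs.get (Fin.cast hlen.symm i) = r ∧ U q' r' ∧
        ∀ j : Fin qs.length, j ≠ i → R (qs.get j) (rs.get (Fin.cast hlen.symm j))

/-- The maximal upward simulation `≼up(R)` induced by `R`. -/
def upSim (A : TDTA Q α rank) (R : Q → Q → Prop) (q r : Q) : Prop :=
  ∃ U, A.IsUpSim R U ∧ U q r

/-- `W` is a downup-relation on `A`. -/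
def IsDownUp (A : TDTA Q α rank) (W : Q → Q → Prop) : Prop :=
  ∀ p q, W p q → ∀ (t : RTree α rank) (π : List ℕ → Q), A.IsRun t π → π [] = p →
    ∃ π', A.IsRun t π' ∧ π' [] = q ∧ ∀ v, t.inRunDom v → A.upSim W (π v) (π' v)

end TDTA

/-- The strict version `S ∖ S⁻¹` of a relation `S`. -/
def strictOf {Q : Type} (S : Q → Q → Prop) (q r : Q) : Prop := S q r ∧ ¬S r q

/-- Lifting of relations to tuples: pointwise `Dw` everywhere and `Ds` at some
position. -/
def liftStrict {Q : Type} (Dw Ds : Q → Q → Prop) (qs rs : List Q) : Prop :=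
  List.Forall₂ Dw qs rs ∧
    ∃ (i : ℕ) (h : i < qs.length) (h' : i < rs.length), Ds (qs.get ⟨i, h⟩) (rs.get ⟨i, h'⟩)

/-- The pruning relation `P(U, Dl)` comparing transitions with the same symbol:
sources by `U`, target tuples by `Dl`. -/
def pruneRel {Q α : Type} (U : Q → Q → Prop) (Dl : List Q → List Q → Prop) :
    Q × α × List Q → Q × α × List Q → Prop :=
  fun τ τ' => U τ.1 τ'.1 ∧ τ.2.1 = τ'.2.1 ∧ Dl τ.2.2 τ'.2.2


/-!
Among the accepting runs on a closed tree, take one maximising a weight in which every node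
contributes the height of its state in the preorder `≼dw`, deeper levels dominating shallower
ones. Suppose it used at `v` a transition `⟨π v, a, qs⟩` dominated by `⟨p, a, rs⟩`. The upward
trace inclusion `π v ⊆up(≼dw) p` rewrites the run above `v` so that it reaches `p` at `v`, keeps
the root initial and only raises states beside the path; then `⟨p, a, rs⟩` is used at `v`, and
the downward simulation lets the run follow the old one below `v`. All states below the level of
`v` are raised, one child of `v` strictly, so the weight increases: a contradiction.
-/

open Finset

namespace RTree

variable {α : Type} {rank : α → ℕ}

def truncAt (t : RTree α rank) (v : List ℕ) : RTree α rank where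
  label w := if v <+: w ∧ w ≠ v then none else t.label w
  finite := t.finite.subset fun w hw h => hw (by simp [h])
  prefixClosed w i hwi := by
    obtain ⟨a, ha, hia⟩ := t.prefixClosed w i fun h => hwi (by simp [h])
    refine ⟨a, ?_, hia⟩
    have hwv : ¬(v <+: w ∧ w ≠ v) := fun ⟨hvw, _⟩ =>
      hwi (if_pos ⟨hvw.trans (w.prefix_append [i]), fun h => by simpa [← h] using hvw.length_le⟩)
    simpa [hwv] using ha

theorem truncAt_label_of_prefix {t : RTree α rank} {v w : List ℕ} (h : w <+: v) :
    (t.truncAt v).label w = t.label w :=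
  if_neg fun hc => hc.2 (antisymm h hc.1)

theorem isLeaf_truncAt {t : RTree α rank} {v : List ℕ} (h : t.label v ≠ none) :
    (t.truncAt v).IsLeaf v :=
  ⟨by rwa [truncAt_label_of_prefix (List.prefix_refl v)],
    fun i => if_pos ⟨v.prefix_append [i], by simp⟩⟩

end RTree

theorem List.Forall₂.rel_getElem_getD {β γ : Type*} {R : β → γ → Prop} {l₁ : List β}
    {l₂ : List γ} (h : List.Forall₂ R l₁ l₂) (d : γ) {i : ℕ} (hi : i < l₁.length) :
    R l₁[i] (l₂.getD i d) := by
  rw [List.getD_eq_getElem _ _ (h.length_eq ▸ hi)]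
  exact h.get hi _

theorem List.Forall₂.relComp {β γ δ : Type*} {R : β → γ → Prop} {S : γ → δ → Prop}
    {l₁ : List β} {l₂ : List γ} {l₃ : List δ} (h₁₂ : List.Forall₂ R l₁ l₂)
    (h₂₃ : List.Forall₂ S l₂ l₃) : List.Forall₂ (Relation.Comp R S) l₁ l₃ := by
  induction h₁₂ generalizing l₃ with
  | nil => rw [List.forall₂_nil_left_iff.mp h₂₃]; exact .nil
  | cons hab _ ih =>
    obtain _ | ⟨hbc, h₂₃⟩ := h₂₃
    exact .cons ⟨_, hab, hbc⟩ (ih h₂₃)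

theorem Finset.sum_mul_pow_lt_sum_mul_pow {ι : Type*} (s : Finset ι) (ℓ f g : ι → ℕ) {c n : ℕ}
    {i₀ : ι} (hf : ∀ i ∈ s, f i ≤ c) (hfg : ∀ i ∈ s, n < ℓ i → f i ≤ g i) (hi₀ : i₀ ∈ s)
    (hℓ : n < ℓ i₀) (hlt : f i₀ < g i₀) :
    ∑ i ∈ s, f i * (#s * c + 1) ^ ℓ i < ∑ i ∈ s, g i * (#s * c + 1) ^ ℓ i := by
  set B := #s * c + 1
  classical
  have hshallow : ∑ i ∈ s with ℓ i ≤ n, f i * B ^ ℓ i < B ^ (n + 1) :=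
    calc ∑ i ∈ s with ℓ i ≤ n, f i * B ^ ℓ i
        ≤ ∑ _i ∈ s, c * B ^ n := by
          refine (sum_le_sum fun i hi => ?_).trans
            (sum_le_sum_of_subset (filter_subset _ s))
          rw [mem_filter] at hi
          exact Nat.mul_le_mul (hf i hi.1) (Nat.pow_le_pow_right (by omega) hi.2)
      _ = #s * c * B ^ n := by rw [sum_const, smul_eq_mul, mul_assoc]
      _ < B ^ (n + 1) := by
          rw [pow_succ']
          exact Nat.mul_lt_mul_of_pos_right (by omega) (by positivity)
  have hdeep : ∑ i ∈ s with ¬ℓ i ≤ n, f i * B ^ ℓ i + B ^ (n + 1)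
      ≤ ∑ i ∈ s with ¬ℓ i ≤ n, g i * B ^ ℓ i := by
    have hi₀' : i₀ ∈ s.filter (¬ℓ · ≤ n) := mem_filter.mpr ⟨hi₀, by omega⟩
    have hbump : ∑ i ∈ s with ¬ℓ i ≤ n, (if i = i₀ then B ^ (n + 1) else 0) = B ^ (n + 1) := by
      rw [sum_ite_eq', if_pos hi₀']
    rw [← hbump, ← sum_add_distrib]
    refine sum_le_sum fun i hi => ?_
    rw [mem_filter] at hi
    split_ifs with h
    · subst h
      calc f i * B ^ ℓ i + B ^ (n + 1) ≤ (f i + 1) * B ^ ℓ i := by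
            rw [add_mul, one_mul]; gcongr; omega; omega
        _ ≤ g i * B ^ ℓ i := Nat.mul_le_mul_right _ hlt
    · simpa using Nat.mul_le_mul_right _ (hfg i hi.1 (by omega))
  rw [← sum_filter_add_sum_filter_not s (ℓ · ≤ n),
    ← sum_filter_add_sum_filter_not s (ℓ · ≤ n) (fun i => g i * B ^ ℓ i)]
  omega

namespace TDTA

variable {Q α : Type} {rank : α → ℕ} {A : TDTA Q α rank}

theorem lang_prune_subset (P : Q × α × List Q → Q × α × List Q → Prop) :
    (A.prune P).lang ⊆ A.lang :=
  fun _ ⟨q, hq, hcl, π, hrun, hπ⟩ => ⟨q, hq, hcl, π, fun v a hv => (hrun v a hv).1, hπ⟩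

theorem IsRun.truncAt {t : RTree α rank} {π : List ℕ → Q} (h : A.IsRun t π) (v : List ℕ) :
    A.IsRun (t.truncAt v) π := by
  intro w a hwa
  refine h w a ?_
  simp only [RTree.truncAt] at hwa
  split_ifs at hwa
  exact hwa

theorem rhsOf_congr {a : α} {π π' : List ℕ → Q} {v : List ℕ}
    (h : ∀ i < rank a, π (v ++ [i]) = π' (v ++ [i])) : A.rhsOf a π v = A.rhsOf a π' v := by
  unfold rhsOf
  split_ifs
  · rfl
  · exact List.map_congr_left fun i hi => h i (List.mem_range.mp hi)

theorem rhsOf_eq_of_mem_delta {r : Q} {a : α} {rs : List Q} (hτ : (r, a, rs) ∈ A.delta)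
    {π : List ℕ → Q} {v : List ℕ} (h : ∀ i < rank a, π (v ++ [i]) = rs.getD i A.top) :
    A.rhsOf a π v = rs := by
  unfold rhsOf
  split_ifs with h0
  · exact ((A.rank_ok _ hτ).1 h0).symm
  · have hlen : rs.length = rank a := (A.rank_ok _ hτ).2 (Nat.pos_of_ne_zero h0)
    refine List.ext_getElem (by simp [hlen]) fun i hi _ => ?_
    rw [List.length_map, List.length_range] at hi
    rw [List.getElem_map, List.getElem_range, h i hi, List.getD_eq_getElem]

theorem length_rhsOf {a : α} (π : List ℕ → Q) (v : List ℕ) (h : rank a ≠ 0) :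
    (A.rhsOf a π v).length = rank a := by
  simp [rhsOf, h]

theorem getElem_rhsOf {a : α} (π : List ℕ → Q) (v : List ℕ) {i : ℕ}
    (hi : i < (A.rhsOf a π v).length) (h : rank a ≠ 0) :
    (A.rhsOf a π v)[i] = π (v ++ [i]) := by
  simp [rhsOf, h]

theorem isDwSim_dwSim : A.IsDwSim A.dwSim := by
  rintro q r ⟨D, hD, hqr⟩
  refine ⟨(hD q r hqr).1, fun a qs hτ => ?_⟩
  obtain ⟨rs, hrs, hqrs⟩ := (hD q r hqr).2 a qs hτ
  exact ⟨rs, hrs, hqrs.imp fun _ _ h => ⟨D, hD, h⟩⟩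

theorem dwSim_refl (q : Q) : A.dwSim q q := by
  refine ⟨Eq, ?_, rfl⟩
  rintro q r rfl
  exact ⟨id, fun a qs hτ => ⟨qs, hτ, List.forall₂_same.mpr fun _ _ => rfl⟩⟩

theorem dwSim_trans {q r s : Q} (hqr : A.dwSim q r) (hrs : A.dwSim r s) : A.dwSim q s := by
  refine ⟨Relation.Comp A.dwSim A.dwSim, ?_, r, hqr, hrs⟩
  rintro x z ⟨y, hxy, hyz⟩
  refine ⟨fun hx => (isDwSim_dwSim y z hyz).1 ((isDwSim_dwSim x y hxy).1 hx), fun a qs hτ => ?_⟩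
  obtain ⟨ys, hys, hxys⟩ := (isDwSim_dwSim x y hxy).2 a qs hτ
  obtain ⟨zs, hzs, hyzs⟩ := (isDwSim_dwSim y z hyz).2 a ys hys
  exact ⟨zs, hzs, hxys.relComp hyzs⟩

open Classical in
noncomputable def dwSimRhs (A : TDTA Q α rank) (r : Q) (a : α) (qs : List Q) : List Q :=
  if h : ∃ rs, (r, a, rs) ∈ A.delta ∧ List.Forall₂ A.dwSim qs rs then h.choose else qs

theorem dwSimRhs_spec {q r : Q} (h : A.dwSim q r) {a : α} {qs : List Q}
    (hτ : (q, a, qs) ∈ A.delta) :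
    (r, a, A.dwSimRhs r a qs) ∈ A.delta ∧ List.Forall₂ A.dwSim qs (A.dwSimRhs r a qs) := by
  have hex := (isDwSim_dwSim q r h).2 a qs hτ
  rw [dwSimRhs, dif_pos hex]
  exact hex.choose_spec

section ExtendRun

variable (A) (t : RTree α rank) (π ρ : List ℕ → Q) (K : List ℕ → Prop) [DecidablePred K]

/- `ρ` is kept on `K` and on the children of `K`; below that, the new run follows `π` through
`≼dw`, parent by parent. The recursion is on the reversed node. -/
noncomputable def extendRunAux : List ℕ → Q
  | [] => ρ []
  | x :: u =>
    if K u.reverse then ρ (u.reverse ++ [x])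
    else (t.label u.reverse).elim A.top fun a =>
      (A.dwSimRhs (extendRunAux u) a (A.rhsOf a π u.reverse)).getD x A.top

noncomputable def extendRun (w : List ℕ) : Q :=
  A.extendRunAux t π ρ K w.reverse

theorem extendRun_nil : A.extendRun t π ρ K [] = ρ [] := rfl

theorem extendRun_snoc (u : List ℕ) (x : ℕ) :
    A.extendRun t π ρ K (u ++ [x]) =
      if K u then ρ (u ++ [x])
      else (t.label u).elim A.top fun a =>
        (A.dwSimRhs (A.extendRun t π ρ K u) a (A.rhsOf a π u)).getD x A.top := by
  rw [extendRun, List.reverse_append, List.reverse_singleton, List.singleton_append,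
    extendRunAux, List.reverse_reverse]
  rfl

variable {A t π ρ K}

theorem extendRun_snoc_of_mem {u : List ℕ} (hu : K u) (x : ℕ) :
    A.extendRun t π ρ K (u ++ [x]) = ρ (u ++ [x]) := by
  rw [extendRun_snoc, if_pos hu]

theorem extendRun_of_mem (hK : ∀ u x, K (u ++ [x]) → K u) {w : List ℕ} (hw : K w) :
    A.extendRun t π ρ K w = ρ w := by
  cases w using List.reverseRecOn with
  | nil => rfl
  | append_singleton u x => exact extendRun_snoc_of_mem (hK u x hw) x

theorem dwSim_extendRun (hrun : A.IsRun t π) (hK₀ : K [])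
    (hfront : ∀ u x, K u → ¬K (u ++ [x]) → t.label (u ++ [x]) ≠ none →
      A.dwSim (π (u ++ [x])) (ρ (u ++ [x])))
    (w : List ℕ) (hw : t.label w ≠ none) (hwK : ¬K w) :
    A.dwSim (π w) (A.extendRun t π ρ K w) := by
  induction w using List.reverseRecOn with
  | nil => exact absurd hK₀ hwK
  | append_singleton u x ih =>
    obtain ⟨a, hua, hx⟩ := t.prefixClosed u x hw
    rw [extendRun_snoc]
    split_ifs with hu
    · exact hfront u x hu hwK hw
    · have hsim := (dwSimRhs_spec (ih (by simp [hua]) hu) (hrun u a hua)).2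
      have hx' : x < (A.rhsOf a π u).length := by rwa [length_rhsOf _ _ (by omega)]
      simpa only [hua, Option.elim, getElem_rhsOf π u hx' (by omega)] using
        hsim.rel_getElem_getD A.top hx'

theorem isRun_extendRun (hrun : A.IsRun t π) (hK : ∀ u x, K (u ++ [x]) → K u) (hK₀ : K [])
    (hρ : ∀ w a, K w → t.label w = some a → (ρ w, a, A.rhsOf a ρ w) ∈ A.delta)
    (hfront : ∀ u x, K u → ¬K (u ++ [x]) → t.label (u ++ [x]) ≠ none →
      A.dwSim (π (u ++ [x])) (ρ (u ++ [x]))) :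
    A.IsRun t (A.extendRun t π ρ K) := by
  intro w a hwa
  by_cases hw : K w
  · rw [extendRun_of_mem hK hw, rhsOf_congr fun i _ => extendRun_snoc_of_mem hw i]
    exact hρ w a hw hwa
  · have hsim := dwSim_extendRun hrun hK₀ hfront w (by simp [hwa]) hw
    obtain ⟨hmem, -⟩ := dwSimRhs_spec hsim (hrun w a hwa)
    rwa [rhsOf_eq_of_mem_delta hmem fun i _ => by rw [extendRun_snoc, if_neg hw, hwa]; rfl]

end ExtendRun

theorem exists_run_of_upIncl {t : RTree α rank} {π : List ℕ → Q} (hrun : A.IsRun t π)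
    {v : List ℕ} {a : α} (hva : t.label v = some a) {p : Q} {rs : List Q}
    (hτ : (p, a, rs) ∈ A.delta) (hup : A.upIncl A.dwSim (π v) p)
    (hrs : List.Forall₂ A.dwSim (A.rhsOf a π v) rs) :
    ∃ π', A.IsRun t π' ∧ (π [] ∈ A.init → π' [] ∈ A.init) ∧
      (∀ i, π' (v ++ [i]) = rs.getD i A.top) ∧
      ∀ w, t.label w ≠ none → ¬w <+: v → A.dwSim (π w) (π' w) := by
  obtain ⟨πr, hπr, hπrv, hinit, hside⟩ :=
    hup.2 (t.truncAt v) v (RTree.isLeaf_truncAt (by simp [hva])) π (hrun.truncAt v) rfl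
  classical
  -- `πr` above and beside `v`, the right-hand side `rs` at the children of `v`
  let ρ w := if v <+: w ∧ w ≠ v then rs.getD (w.getD v.length 0) A.top else πr w
  have hρ_child (i : ℕ) : ρ (v ++ [i]) = rs.getD i A.top := by simp [ρ]
  have hρ_prefix {w : List ℕ} (hw : w <+: v) : ρ w = πr w :=
    if_neg fun hc => hc.2 (antisymm hw hc.1)
  have hρ_side {u : List ℕ} (hu : u <+: v) (huv : u ≠ v) (x : ℕ) :
      ρ (u ++ [x]) = πr (u ++ [x]) := by
    refine if_neg fun ⟨hvu, hne⟩ => ?_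
    rcases List.prefix_concat_iff.mp hvu with h | h
    · exact hne h.symm
    · exact huv (antisymm hu h)
  have hK (u : List ℕ) (x : ℕ) (h : u ++ [x] <+: v) : u <+: v := (u.prefix_append [x]).trans h
  have hρ_run (w : List ℕ) (b : α) (hw : w <+: v) (hwb : t.label w = some b) :
      (ρ w, b, A.rhsOf b ρ w) ∈ A.delta := by
    by_cases hwv : w = v
    · subst hwv
      obtain rfl : a = b := Option.some.inj (hva.symm.trans hwb)
      rw [hρ_prefix hw, hπrv, rhsOf_eq_of_mem_delta hτ fun i _ => hρ_child i]
      exact hτ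
    · rw [hρ_prefix hw, rhsOf_congr fun i _ => hρ_side hw hwv i]
      exact hπr w b (by rwa [RTree.truncAt_label_of_prefix hw])
  have hfront (u : List ℕ) (x : ℕ) (hu : u <+: v) (hux : ¬u ++ [x] <+: v)
      (hl : t.label (u ++ [x]) ≠ none) : A.dwSim (π (u ++ [x])) (ρ (u ++ [x])) := by
    obtain ⟨b, hub, hx⟩ := t.prefixClosed u x hl
    by_cases huv : u = v
    · subst huv
      obtain rfl : a = b := Option.some.inj (hva.symm.trans hub)
      have hx' : x < (A.rhsOf a π u).length := by rwa [length_rhsOf _ _ (by omega)]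
      rw [hρ_child, ← getElem_rhsOf π u hx' (by omega)]
      exact hrs.rel_getElem_getD A.top hx'
    · rw [hρ_side hu huv]
      refine hside u x hu huv (Or.inr ⟨u, x, b, rfl, ?_, hx⟩) hux
      rwa [RTree.truncAt_label_of_prefix hu]
  refine ⟨A.extendRun t π ρ (· <+: v), isRun_extendRun hrun hK v.nil_prefix hρ_run hfront,
    fun h => ?_, fun i => ?_, dwSim_extendRun hrun v.nil_prefix hfront⟩
  · rw [extendRun_nil, hρ_prefix v.nil_prefix]
    exact hinit [] v.nil_prefix h
  · rw [extendRun_snoc_of_mem (K := (· <+: v)) (List.prefix_refl v), hρ_child]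

theorem exists_strictOf_child_of_liftStrict {p : Q} {a : α} {rs : List Q}
    (hτ : (p, a, rs) ∈ A.delta) {π : List ℕ → Q} {v : List ℕ}
    (h : liftStrict A.dwSim (strictOf A.dwSim) (A.rhsOf a π v) rs) :
    ∃ i < rank a, strictOf A.dwSim (π (v ++ [i])) (rs.getD i A.top) := by
  obtain ⟨-, i, hi, hi', hlt⟩ := h
  have h0 : rank a ≠ 0 := by
    intro h0
    have hrhs : A.rhsOf a π v = [A.top] := if_pos h0
    obtain rfl : rs = [A.top] := (A.rank_ok _ hτ).1 h0
    simp only [hrhs, List.get_eq_getElem, List.getElem_singleton] at hlt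
    exact hlt.2 (dwSim_refl _)
  refine ⟨i, by rwa [length_rhsOf _ _ h0] at hi, ?_⟩
  rwa [List.get_eq_getElem, List.get_eq_getElem, getElem_rhsOf _ _ _ h0,
    ← List.getD_eq_getElem _ A.top] at hlt

section Height

variable [Fintype Q]

open Classical in
noncomputable def dwHeight (A : TDTA Q α rank) (q : Q) : ℕ :=
  #{r | A.dwSim r q}

theorem dwHeight_le_card (q : Q) : A.dwHeight q ≤ Fintype.card Q :=
  card_le_univ _

theorem dwHeight_mono {q r : Q} (h : A.dwSim q r) : A.dwHeight q ≤ A.dwHeight r := by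
  classical
  exact card_le_card fun s hs => by simp_all [dwSim_trans (by simpa using hs) h]

theorem dwHeight_lt {q r : Q} (h : strictOf A.dwSim q r) : A.dwHeight q < A.dwHeight r := by
  classical
  refine card_lt_card ((ssubset_iff_of_subset fun s hs => ?_).mpr ⟨r, ?_, ?_⟩)
  · simpa using dwSim_trans (by simpa using hs) h.1
  · simpa using dwSim_refl r
  · simpa using h.2

end Height

theorem exists_isRun_prune_upIncl_dwSim [Fintype Q] {t : RTree α rank} (hcl : t.IsClosed)
    {π : List ℕ → Q} (hrun : A.IsRun t π) (hinit : π [] ∈ A.init) :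
    ∃ π', (A.prune (pruneRel (A.upIncl A.dwSim)
      (liftStrict A.dwSim (strictOf A.dwSim)))).IsRun t π' ∧ π' [] ∈ A.init := by
  set D := t.finite.toFinset
  set B := #D * Fintype.card Q + 1
  let weight (π : List ℕ → Q) : ℕ := ∑ w ∈ D, A.dwHeight (π w) * B ^ w.length
  have hbdd : BddAbove (weight '' {π | A.IsRun t π ∧ π [] ∈ A.init}) :=
    ⟨∑ w ∈ D, Fintype.card Q * B ^ w.length, by
      rintro _ ⟨π, -, rfl⟩
      exact sum_le_sum fun w _ => Nat.mul_le_mul_right _ (dwHeight_le_card _)⟩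
  obtain ⟨_, ⟨π, ⟨hrun, hinit⟩, rfl⟩, hmax⟩ :=
    hbdd.exists_isGreatest_of_nonempty ⟨_, π, ⟨hrun, hinit⟩, rfl⟩
  refine ⟨π, fun v a hva => ⟨hrun v a hva, ?_⟩, hinit⟩
  rintro ⟨⟨p, b, rs⟩, hτ, hup, rfl, hrs⟩
  obtain ⟨π', hrun', hinit', hchild, hsim⟩ := exists_run_of_upIncl hrun hva hτ hup hrs.1
  obtain ⟨i, hi, hlt⟩ := exists_strictOf_child_of_liftStrict hτ hrs
  have hweight : weight π < weight π' := by
    refine sum_mul_pow_lt_sum_mul_pow D List.length _ _ (fun w _ => dwHeight_le_card _)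
      (fun w hw hvw => dwHeight_mono (hsim w ?_ fun h => hvw.not_ge h.length_le))
      (i₀ := v ++ [i]) ?_ (by simp) (dwHeight_lt (hchild i ▸ hlt))
    · simpa [D] using hw
    · simpa [D] using hcl v a hva i hi
  exact (hmax ⟨π', ⟨hrun', hinit' hinit⟩, rfl⟩).not_gt hweight

end TDTA

theorem statement_7_general {Q α : Type} [Fintype Q] {rank : α → ℕ}
    (A : TDTA Q α rank) :
    (A.prune (pruneRel (A.upIncl A.dwSim)
      (liftStrict A.dwSim (strictOf A.dwSim)))).lang = A.lang := by
  refine (TDTA.lang_prune_subset _).antisymm ?_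
  rintro t ⟨q, hq, hcl, π, hrun, rfl⟩
  obtain ⟨π', hrun', hinit'⟩ := A.exists_isRun_prune_upIncl_dwSim hcl hrun hq
  exact ⟨π' [], hinit', hcl, π', hrun', rfl⟩

/-- `P(⊆up(≼dw), <dw)` is good for pruning. -/
theorem statement_7 {Q α : Type} [Fintype Q] [Fintype α] {rank : α → ℕ}
    (A : TDTA Q α rank) :
    (A.prune (pruneRel (A.upIncl A.dwSim)
      (liftStrict A.dwSim (strictOf A.dwSim)))).lang = A.lang :=
  statement_7_general A
end

section
/- Let A = (Σ, Q, δ, I) be a top-down tree automaton and let ≡dw := ⊆dw ∩ (⊆dw)⁻¹ be the equivalence induced by downward trace inclusion. Then ≡dw is good for quotienting, i.e., L(A/≡dw) = L(A). -/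
/-- The quotient automaton `A/≡` w.r.t. a setoid `s` on its states. -/
def TDTA.quotAut {Q α : Type} {rank : α → ℕ} (A : TDTA Q α rank) (s : Setoid Q) :
    TDTA (Quotient s) α rank where
  top := Quotient.mk s A.top
  init := {x | ∃ q ∈ A.init, x = Quotient.mk s q}
  delta := {τ | ∃ q a qs, (q, a, qs) ∈ A.delta ∧
    τ = (Quotient.mk s q, a, qs.map fun p => Quotient.mk s p)}
  rank_ok := by
    rintro τ ⟨q, a, qs, hmem, rfl⟩
    refine ⟨fun h0 => ?_, fun h0 => ?_⟩
    · have h : qs = [A.top] := (A.rank_ok _ hmem).1 h0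
      simp [h]
    · simpa using (A.rank_ok _ hmem).2 h0


/-!
A run of `A` projects to a run of `A/≡` by mapping every state to its class. Conversely, a run
of `A/≡` on a closed tree is lifted bottom-up: if it uses the quotient of a rule `⟨p, a, p₁⋯pₙ⟩`
at the root, where `[p] = [q]`, the subtrees are lifted by induction to runs from the `pᵢ`, the
rule glues them into a run from `p`, and `p ⊆dw q` turns this into a run from `q`.
-/

namespace RTree

variable {α : Type} {rank : α → ℕ}

theorem label_ne_none_of_append (t : RTree α rank) (v u : List ℕ)
    (h : t.label (v ++ u) ≠ none) : t.label v ≠ none := by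
  induction u using List.reverseRecOn with
  | nil => simpa using h
  | append_singleton u i ih =>
    obtain ⟨a, ha, _⟩ := t.prefixClosed (v ++ u) i (by simpa [List.append_assoc] using h)
    exact ih (by simp [ha])

theorem label_eq_none_of_root {t : RTree α rank} (h : t.label [] = none) (v : List ℕ) :
    t.label v = none := by
  by_contra hv
  exact t.label_ne_none_of_append [] v hv h

theorem lt_rank_of_label_cons {t : RTree α rank} {a : α} (ha : t.label [] = some a)
    {i : ℕ} {w : List ℕ} (h : t.label (i :: w) ≠ none) : i < rank a := by
  obtain ⟨a', ha', hi⟩ := t.prefixClosed [] i (t.label_ne_none_of_append [i] w h)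
  rw [ha] at ha'
  cases ha'
  exact hi

def child (t : RTree α rank) (i : ℕ) : RTree α rank where
  label v := t.label (i :: v)
  finite := t.finite.preimage (List.cons_injective.injOn)
  prefixClosed v j h := t.prefixClosed (i :: v) j h

theorem IsClosed.child {t : RTree α rank} (ht : t.IsClosed) (i : ℕ) : (t.child i).IsClosed :=
  fun v a ha j hj => ht (i :: v) a ha j hj

theorem card_child_lt {t : RTree α rank} (hroot : t.label [] ≠ none) (i : ℕ) :
    (t.child i).finite.toFinset.card < t.finite.toFinset.card := by
  have hsub : (t.child i).finite.toFinset.image (List.cons i) ⊆ t.finite.toFinset.erase [] := by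
    intro w hw
    obtain ⟨v, hv, rfl⟩ := Finset.mem_image.mp hw
    simpa [child] using (Set.Finite.mem_toFinset _).mp hv
  calc (t.child i).finite.toFinset.card
      = ((t.child i).finite.toFinset.image (List.cons i)).card :=
        (Finset.card_image_of_injective _ List.cons_injective).symm
    _ ≤ (t.finite.toFinset.erase []).card := Finset.card_le_card hsub
    _ < t.finite.toFinset.card := Finset.card_erase_lt_of_mem (by simpa using hroot)

end RTree

namespace TDTA

variable {Q α : Type} {rank : α → ℕ} (A : TDTA Q α rank)

theorem isRun_of_root_eq_none {t : RTree α rank} (h : t.label [] = none) (π : List ℕ → Q) :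
    A.IsRun t π := by
  intro v a ha
  simp [RTree.label_eq_none_of_root h v] at ha

theorem IsRun.child {A : TDTA Q α rank} {t : RTree α rank} {π : List ℕ → Q} (hπ : A.IsRun t π)
    (i : ℕ) : A.IsRun (t.child i) (fun w => π (i :: w)) :=
  fun v a ha => hπ (i :: v) a ha

def glue (p : Q) (πs : ℕ → List ℕ → Q) : List ℕ → Q
  | [] => p
  | i :: w => πs i w

theorem isRun_glue {t : RTree α rank} {a : α} (ha : t.label [] = some a) {p : Q} {ps : List Q}
    (hτ : (p, a, ps) ∈ A.delta) (πs : ℕ → List ℕ → Q)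
    (hπs : ∀ i < rank a, A.IsRun (t.child i) (πs i) ∧ ps[i]? = some (πs i [])) :
    A.IsRun t (glue p πs) := by
  rintro (_ | ⟨i, w⟩) b hb
  · obtain rfl : a = b := Option.some.inj (ha.symm.trans hb)
    suffices A.rhsOf a (glue p πs) [] = ps by simpa [glue, this] using hτ
    by_cases h0 : rank a = 0
    · simp [rhsOf, h0, ((A.rank_ok _ hτ).1 h0).symm]
    · have hlen : ps.length = rank a := (A.rank_ok _ hτ).2 (Nat.pos_of_ne_zero h0)
      refine List.ext_getElem? fun i => ?_
      by_cases hi : i < rank a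
      · simp [rhsOf, h0, hi, glue, (hπs i hi).2]
      · simp [rhsOf, h0, hi, hlen]
  · exact (hπs i (RTree.lt_rank_of_label_cons ha (Option.ne_none_iff_exists'.mpr ⟨b, hb⟩))).1 w b hb

variable (s : Setoid Q)

theorem rhsOf_quotAut (a : α) (π : List ℕ → Q) (v : List ℕ) :
    (A.quotAut s).rhsOf a (fun w => ⟦π w⟧) v = (A.rhsOf a π v).map (⟦·⟧) := by
  by_cases h0 : rank a = 0 <;> simp [rhsOf, h0, quotAut]

theorem IsRun.quotAut {A : TDTA Q α rank} {t : RTree α rank} {π : List ℕ → Q}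
    (hπ : A.IsRun t π) : (A.quotAut s).IsRun t (fun v => ⟦π v⟧) := by
  intro v a ha
  rw [rhsOf_quotAut]
  exact ⟨π v, a, A.rhsOf a π v, hπ v a ha, rfl⟩

theorem exists_rule_of_quotAut_isRun {t : RTree α rank} {πb : List ℕ → Quotient s}
    (hπb : (A.quotAut s).IsRun t πb) {a : α} (ha : t.label [] = some a) :
    ∃ p ps, (p, a, ps) ∈ A.delta ∧ πb [] = ⟦p⟧ ∧
      ∀ i < rank a, ∃ pᵢ, ps[i]? = some pᵢ ∧ πb [i] = ⟦pᵢ⟧ := by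
  obtain ⟨p, a', ps, hτ, heq⟩ := hπb [] a ha
  simp only [Prod.mk.injEq] at heq
  obtain ⟨hroot, rfl, hrhs⟩ := heq
  refine ⟨p, ps, hτ, hroot, fun i hi => ?_⟩
  have h := congrArg (·[i]?) hrhs
  simp only [rhsOf, if_neg (Nat.ne_zero_of_lt hi), List.getElem?_map,
    List.getElem?_range hi, List.nil_append] at h
  obtain ⟨pᵢ, hpᵢ, hmk⟩ := Option.map_eq_some_iff.mp h.symm
  exact ⟨pᵢ, hpᵢ, hmk.symm⟩

variable {A s}

theorem exists_isRun_of_quotAut_isRun (hs : ∀ p q, s.r p q → A.dwIncl p q)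
    {t : RTree α rank} (ht : t.IsClosed) {πb : List ℕ → Quotient s}
    (hπb : (A.quotAut s).IsRun t πb) {q : Q} (hq : πb [] = ⟦q⟧) :
    ∃ π, A.IsRun t π ∧ π [] = q := by
  induction hn : t.finite.toFinset.card using Nat.strong_induction_on generalizing t πb q with
  | _ n IH =>
  cases ha : t.label [] with
  | none => exact ⟨fun _ => q, A.isRun_of_root_eq_none ha _, rfl⟩
  | some a =>
    obtain ⟨p, ps, hτ, hp, hchildren⟩ := A.exists_rule_of_quotAut_isRun s hπb ha
    have hsubruns : ∀ i, ∃ πᵢ : List ℕ → Q,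
        i < rank a → A.IsRun (t.child i) πᵢ ∧ ps[i]? = some (πᵢ []) := by
      intro i
      by_cases hi : i < rank a
      · obtain ⟨pᵢ, hpᵢ, hmk⟩ := hchildren i hi
        obtain ⟨πᵢ, hπᵢ, hπᵢ0⟩ := IH _ (hn ▸ RTree.card_child_lt (by simp [ha]) i)
          (ht.child i) (hπb.child i) hmk rfl
        exact ⟨πᵢ, fun _ => ⟨hπᵢ, hπᵢ0 ▸ hpᵢ⟩⟩
      · exact ⟨fun _ => q, fun h => absurd h hi⟩
    choose πs hπs using hsubruns
    have hpq : s.r p q := Quotient.exact (hp.symm.trans hq)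
    exact hs p q hpq t ht _ (A.isRun_glue ha hτ πs hπs) rfl

theorem lang_quotAut_eq_of_le_dwIncl (hs : ∀ p q, s.r p q → A.dwIncl p q) :
    (A.quotAut s).lang = A.lang := by
  ext t
  constructor
  · rintro ⟨_, ⟨q, hq, rfl⟩, ht, πb, hπb, hroot⟩
    exact ⟨q, hq, ht, exists_isRun_of_quotAut_isRun hs ht hπb hroot⟩
  · rintro ⟨q, hq, ht, π, hπ, rfl⟩
    exact ⟨⟦π []⟧, ⟨π [], hq, rfl⟩, ht, _, hπ.quotAut s, rfl⟩

end TDTA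

theorem statement_8_general {Q α : Type} {rank : α → ℕ}
    (A : TDTA Q α rank) (s : Setoid Q)
    (hs : ∀ q r, s.r q r ↔ (A.dwIncl q r ∧ A.dwIncl r q)) :
    (A.quotAut s).lang = A.lang :=
  TDTA.lang_quotAut_eq_of_le_dwIncl fun q r h => ((hs q r).mp h).1

/-- The equivalence `≡dw = ⊆dw ∩ ⊇dw` is good for quotienting. -/
theorem statement_8 {Q α : Type} [Fintype Q] [Fintype α] {rank : α → ℕ}
    (A : TDTA Q α rank) (s : Setoid Q)
    (hs : ∀ q r, s.r q r ↔ (A.dwIncl q r ∧ A.dwIncl r q)) :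
    (A.quotAut s).lang = A.lang :=
  statement_8_general A s hs
end

section
/- There exists a nondeterministic finite word automaton A = (Σ, Q, δ, I, F) for which P(≼bw, ⊂di) is not good for pruning, i.e., L(Prune(A, P(≼bw, ⊂di))) ≠ L(A), where ≼bw is the maximal backward simulation preorder and ⊂di = ⊆di ∖ (⊆di)⁻¹ is the strict version of direct forward trace inclusion. (A witness is the 9-state automaton over {a,b,c} of Figure 1(c) of the paper, which loses the word aaa after pruning.) -/
/-- A nondeterministic finite word automaton. -/
structure WNFA (Q α : Type) where
  delta : Set (Q × α × Q)
  init : Set Q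
  final : Set Q

namespace WNFA

variable {Q α : Type}

/-- Reachability along a word. -/
inductive Reach (A : WNFA Q α) : Q → List α → Q → Prop
  | nil (q : Q) : Reach A q [] q
  | cons {q q' q'' : Q} {a : α} {w : List α} :
      (q, a, q') ∈ A.delta → Reach A q' w q'' → Reach A q (a :: w) q''

/-- The language of the automaton. -/
def lang (A : WNFA Q α) : Set (List α) :=
  {w | ∃ q ∈ A.init, ∃ q' ∈ A.final, A.Reach q w q'}

/-- `qs` is the sequence of states of a trace on the word `w`
(`qs` has length `w.length + 1`). -/
inductive IsTrace (A : WNFA Q α) : List Q → List α → Prop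
  | nil (q : Q) : IsTrace A [q] []
  | cons {q q' : Q} {qs : List Q} {a : α} {w : List α} :
      (q, a, q') ∈ A.delta → IsTrace A (q' :: qs) w → IsTrace A (q :: q' :: qs) (a :: w)

/-- `D` is a direct forward simulation on `A`. -/
def IsDiSim (A : WNFA Q α) (D : Q → Q → Prop) : Prop :=
  ∀ q r, D q r → (q ∈ A.final → r ∈ A.final) ∧
    ∀ a q', (q, a, q') ∈ A.delta → ∃ r', (r, a, r') ∈ A.delta ∧ D q' r'

/-- The maximal direct forward simulation preorder `≼di`. -/
def diSim (A : WNFA Q α) (q r : Q) : Prop := ∃ D, A.IsDiSim D ∧ D q r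

/-- `B` is a backward simulation on `A`. -/
def IsBwSim (A : WNFA Q α) (B : Q → Q → Prop) : Prop :=
  ∀ q r, B q r → (q ∈ A.final → r ∈ A.final) ∧ (q ∈ A.init → r ∈ A.init) ∧
    ∀ a q', (q', a, q) ∈ A.delta → ∃ r', (r', a, r) ∈ A.delta ∧ B q' r'

/-- The maximal backward simulation preorder `≼bw`. -/
def bwSim (A : WNFA Q α) (q r : Q) : Prop := ∃ B, A.IsBwSim B ∧ B q r

/-- Direct forward trace inclusion `q ⊆di r`. -/
def diIncl (A : WNFA Q α) (q r : Q) : Prop :=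
  (q ∈ A.final → r ∈ A.final) ∧
  ∀ w qs, A.IsTrace qs w → qs.head? = some q →
    ∃ rs, A.IsTrace rs w ∧ rs.head? = some r ∧
      List.Forall₂ (fun x y => x ∈ A.final → y ∈ A.final) qs rs

/-- Backward trace inclusion `q ⊆bw r`. -/
def bwIncl (A : WNFA Q α) (q r : Q) : Prop :=
  (q ∈ A.final → r ∈ A.final) ∧ (q ∈ A.init → r ∈ A.init) ∧
  ∀ w qs, A.IsTrace qs w → qs.getLast? = some q →
    ∃ rs, A.IsTrace rs w ∧ rs.getLast? = some r ∧
      List.Forall₂ (fun x y => (x ∈ A.final → y ∈ A.final) ∧ (x ∈ A.init → y ∈ A.init)) qs rs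

/-- Pruning: keep exactly the transitions that are maximal w.r.t. `P`. -/
def prune (A : WNFA Q α) (P : Q × α × Q → Q × α × Q → Prop) : WNFA Q α where
  delta := {τ | τ ∈ A.delta ∧ ¬∃ τ' ∈ A.delta, P τ τ'}
  init := A.init
  final := A.final

end WNFA

/-- The pruning relation `P(Ru, Rd)` on word-automaton transitions. -/
def wPruneRel {Q α : Type} (Ru Rd : Q → Q → Prop) :
    Q × α × Q → Q × α × Q → Prop :=
  fun τ τ' => Ru τ.1 τ'.1 ∧ τ.2.1 = τ'.2.1 ∧ Rd τ.2.2 τ'.2.2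


/-!
The witness has one letter, states `0, …, 4`, initial state `4`, final state `1` and transitions
`0→1, 0→3, 1→4, 2→0, 2→2, 3→1, 4→1, 4→2`. The word `aaaa` has exactly two accepting runs,
`4→2→0→3→1` and `4→2→2→0→1`. Since `0 ≼bw 2` and `2 ≼bw 2`, pruning removes `0→3` in favour of
`2→0` because `3 ⊂di 0`, and `2→2` in favour of `2→0` because `2 ⊂di 0`, destroying both runs.

The inclusion `2 ⊆di 0` is not witnessed by a direct simulation: `0` must choose between `1`
and `3` before knowing how long `2` loops. A set-valued simulation postpones that choice.
-/

theorem List.Forall₂.rel_getLast? {α β : Type*} {R : α → β → Prop} {l₁ : List α} {l₂ : List β}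
    (h : List.Forall₂ R l₁ l₂) {x : α} {y : β} (hx : l₁.getLast? = some x)
    (hy : l₂.getLast? = some y) : R x y := by
  rw [List.getLast?_eq_head?_reverse] at hx hy
  have hrev := List.forall₂_reverse_iff.2 h
  generalize l₁.reverse = m₁ at hx hrev
  generalize l₂.reverse = m₂ at hy hrev
  cases hrev with
  | nil => simp at hx
  | cons hxy _ => cases hx; cases hy; exact hxy

namespace WNFA

variable {Q α : Type} {A : WNFA Q α}

def langFrom (A : WNFA Q α) (q : Q) : Set (List α) :=
  {w | ∃ f ∈ A.final, A.Reach q w f}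

@[simp]
theorem reach_nil_iff {q q' : Q} : A.Reach q [] q' ↔ q = q' :=
  ⟨fun h => by cases h; rfl, fun h => h ▸ .nil q⟩

@[simp]
theorem reach_cons_iff {q q'' : Q} {a : α} {w : List α} :
    A.Reach q (a :: w) q'' ↔ ∃ q', (q, a, q') ∈ A.delta ∧ A.Reach q' w q'' :=
  ⟨fun h => by cases h with | cons h₁ h₂ => exact ⟨_, h₁, h₂⟩,
    fun ⟨_, h₁, h₂⟩ => .cons h₁ h₂⟩

instance decidableReach [Fintype Q] [DecidablePred (· ∈ A.delta)] [DecidableEq Q] :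
    ∀ q w q', Decidable (A.Reach q w q')
  | _, [], _ => decidable_of_iff _ reach_nil_iff.symm
  | _, _ :: w, q'' =>
    have := fun p => decidableReach p w q''
    decidable_of_iff _ reach_cons_iff.symm

theorem Reach.mono {B : WNFA Q α} (hAB : A.delta ⊆ B.delta) {q q' : Q} {w : List α}
    (h : A.Reach q w q') : B.Reach q w q' := by
  induction h with
  | nil q => exact .nil q
  | cons ht _ ih => exact .cons (hAB ht) ih

theorem lang_mono {B : WNFA Q α} (hδ : A.delta ⊆ B.delta) (hI : A.init ⊆ B.init)
    (hF : A.final ⊆ B.final) : A.lang ⊆ B.lang := by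
  rintro w ⟨q, hq, f, hf, h⟩
  exact ⟨q, hI hq, f, hF hf, h.mono hδ⟩

theorem Reach.exists_isTrace {q f : Q} {w : List α} (h : A.Reach q w f) :
    ∃ qs, A.IsTrace qs w ∧ qs.head? = some q ∧ qs.getLast? = some f := by
  induction h with
  | nil q => exact ⟨[q], .nil q, rfl, rfl⟩
  | cons ht _ ih =>
    obtain ⟨_ | ⟨p, ps⟩, hqs, hhead, hlast⟩ := ih
    · simp at hhead
    · obtain rfl : p = _ := Option.some.inj hhead
      exact ⟨_ :: p :: ps, .cons ht hqs, rfl, List.getLast?_cons_cons.trans hlast⟩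

theorem IsTrace.exists_reach {rs : List Q} {w : List α} (h : A.IsTrace rs w) :
    ∃ r f, rs.head? = some r ∧ rs.getLast? = some f ∧ A.Reach r w f := by
  induction h with
  | nil q => exact ⟨q, q, rfl, rfl, .nil q⟩
  | cons ht _ ih =>
    obtain ⟨r, f, hhead, hlast, hr⟩ := ih
    obtain rfl := Option.some.inj hhead
    exact ⟨_, f, rfl, List.getLast?_cons_cons.trans hlast, .cons ht hr⟩

theorem diIncl.langFrom_subset {q r : Q} (h : A.diIncl q r) : A.langFrom q ⊆ A.langFrom r := by
  rintro w ⟨f, hf, hq⟩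
  obtain ⟨qs, hqs, hhead, hlast⟩ := hq.exists_isTrace
  obtain ⟨rs, hrs, hrhead, hdom⟩ := h.2 w qs hqs hhead
  obtain ⟨r', f', hr', hlast', hreach⟩ := hrs.exists_reach
  obtain rfl : r = r' := Option.some.inj (hrhead.symm.trans hr')
  exact ⟨f', hdom.rel_getLast? hlast hlast' hf, hreach⟩

theorem isBwSim_eq : A.IsBwSim (· = ·) :=
  fun _ _ h => h ▸ ⟨id, id, fun _ q' hq' => ⟨q', hq', rfl⟩⟩

theorem bwSim_refl (q : Q) : A.bwSim q q :=
  ⟨_, isBwSim_eq, rfl⟩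

/-- `M q S` lets Duplicator answer `q` with a set `S` of candidate states, postponing the choice:
every state of the answer `S'` to a move of `q` has a predecessor in `S`, so one dominating trace
can be extracted backwards once Spoiler's trace is complete. -/
def IsDiSetSim (A : WNFA Q α) (M : Q → Finset Q → Prop) : Prop :=
  ∀ q S, M q S → S.Nonempty ∧ (q ∈ A.final → ∀ r ∈ S, r ∈ A.final) ∧
    ∀ a q', (q, a, q') ∈ A.delta →
      ∃ S', M q' S' ∧ ∀ r' ∈ S', ∃ r ∈ S, (r, a, r') ∈ A.delta

theorem IsDiSetSim.exists_trace {M : Q → Finset Q → Prop} (hM : A.IsDiSetSim M)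
    {qs : List Q} {w : List α} (hqs : A.IsTrace qs w) {q : Q} {S : Finset Q} (hqS : M q S)
    (hhead : qs.head? = some q) :
    ∃ r ∈ S, ∃ rs, A.IsTrace rs w ∧ rs.head? = some r ∧
      List.Forall₂ (fun x y => x ∈ A.final → y ∈ A.final) qs rs := by
  induction hqs generalizing q S with
  | nil q₀ =>
    obtain rfl := Option.some.inj hhead
    obtain ⟨⟨r, hr⟩, hfin, -⟩ := hM _ S hqS
    exact ⟨r, hr, [r], .nil r, rfl, .cons (fun hq => hfin hq r hr) .nil⟩
  | cons ht _ ih =>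
    obtain rfl := Option.some.inj hhead
    obtain ⟨-, hfin, hstep⟩ := hM _ S hqS
    obtain ⟨S', hqS', hpred⟩ := hstep _ _ ht
    obtain ⟨r', hr', _ | ⟨r'', rs⟩, hrs, hrhead, hdom⟩ := ih hqS' rfl
    · simp at hrhead
    obtain rfl : r' = r'' := (Option.some.inj hrhead).symm
    obtain ⟨r, hr, hrr'⟩ := hpred r' hr'
    exact ⟨r, hr, r :: r' :: rs, .cons hrr' hrs, rfl, .cons (fun hq => hfin hq r hr) hdom⟩

theorem IsDiSetSim.diIncl {M : Q → Finset Q → Prop} (hM : A.IsDiSetSim M) {q r : Q}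
    (hqr : M q {r}) : A.diIncl q r := by
  refine ⟨fun hq => (hM q {r} hqr).2.1 hq r (Finset.mem_singleton_self r), ?_⟩
  intro w qs hqs hhead
  obtain ⟨r', hr', htrace⟩ := hM.exists_trace hqs hqr hhead
  obtain rfl := Finset.mem_singleton.1 hr'
  exact htrace

theorem not_mem_prune_delta {P : Q × α × Q → Q × α × Q → Prop} {τ τ' : Q × α × Q}
    (hτ' : τ' ∈ A.delta) (hP : P τ τ') : τ ∉ (A.prune P).delta :=
  fun hτ => hτ.2 ⟨τ', hτ', hP⟩

end WNFA

namespace PruneCounterexample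

open WNFA

def transitions : List (Fin 5 × Unit × Fin 5) :=
  [(0, (), 1), (0, (), 3), (1, (), 4), (2, (), 0), (2, (), 2), (3, (), 1), (4, (), 1), (4, (), 2)]

abbrev A : WNFA (Fin 5) Unit := ⟨{t | t ∈ transitions}, {4}, {1}⟩

abbrev prunedA : WNFA (Fin 5) Unit := A.prune (wPruneRel A.bwSim (strictOf A.diIncl))

theorem bwSim_zero_two : A.bwSim 0 2 :=
  ⟨fun q r => q = r ∨ q = 0 ∧ r = 2, by unfold IsBwSim; decide, .inr ⟨rfl, rfl⟩⟩

def setSim (q : Fin 5) (S : Finset (Fin 5)) : Prop :=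
  S = {q} ∨
    (q, S) ∈ [(0, {1, 3}), (0, {1, 4}), (2, {0}), (2, {1, 3}), (2, {1, 4}), (3, {0}), (3, {4})]

set_option synthInstance.maxSize 2000 in
theorem isDiSetSim_setSim : A.IsDiSetSim setSim := by
  unfold IsDiSetSim setSim; decide

theorem strictOf_diIncl_three_zero : strictOf A.diIncl 3 0 := by
  refine ⟨isDiSetSim_setSim.diIncl (.inr (by decide)), fun h => ?_⟩
  have : [(), ()] ∉ A.langFrom 3 := by unfold langFrom; decide
  exact this (h.langFrom_subset (by unfold langFrom; decide))

theorem strictOf_diIncl_two_zero : strictOf A.diIncl 2 0 := by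
  refine ⟨isDiSetSim_setSim.diIncl (.inr (by decide)), fun h => ?_⟩
  have : [()] ∉ A.langFrom 2 := by unfold langFrom; decide
  exact this (h.langFrom_subset (by unfold langFrom; decide))

def keptTransitions : List (Fin 5 × Unit × Fin 5) :=
  [(0, (), 1), (1, (), 4), (2, (), 0), (3, (), 1), (4, (), 1), (4, (), 2)]

theorem prunedA_delta_subset : prunedA.delta ⊆ {t | t ∈ keptTransitions} := by
  have h03 : (0, (), 3) ∉ prunedA.delta := not_mem_prune_delta (τ' := (2, (), 0)) (by decide)
    ⟨bwSim_zero_two, rfl, strictOf_diIncl_three_zero⟩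
  have h22 : (2, (), 2) ∉ prunedA.delta := not_mem_prune_delta (τ' := (2, (), 0)) (by decide)
    ⟨bwSim_refl 2, rfl, strictOf_diIncl_two_zero⟩
  have hkept : ∀ τ ∈ transitions, τ ≠ (0, (), 3) → τ ≠ (2, (), 2) → τ ∈ keptTransitions := by
    decide
  intro τ hτ
  exact hkept τ hτ.1 (by rintro rfl; exact h03 hτ) (by rintro rfl; exact h22 hτ)

theorem word_mem_lang : [(), (), (), ()] ∈ A.lang :=
  ⟨4, rfl, 1, rfl, .cons (q' := 2) (by decide) <| .cons (q' := 0) (by decide) <|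
    .cons (q' := 3) (by decide) <| .cons (by decide) <| .nil 1⟩

theorem word_not_mem_lang_prunedA : [(), (), (), ()] ∉ prunedA.lang := by
  intro h
  have hkept := lang_mono (B := ⟨{t | t ∈ keptTransitions}, {4}, {1}⟩) prunedA_delta_subset
    subset_rfl subset_rfl h
  revert hkept
  unfold lang; decide

end PruneCounterexample

/-- There is an NFA for which `P(≼bw, ⊂di)` is not good for pruning. -/
theorem statement_13 : ∃ (Q α : Type) (_ : Fintype Q) (_ : Fintype α)
    (A : WNFA Q α),
    (A.prune (wPruneRel A.bwSim (strictOf A.diIncl))).lang ≠ A.lang :=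
  ⟨Fin 5, Unit, inferInstance, inferInstance, PruneCounterexample.A,
    (ne_of_mem_of_not_mem' PruneCounterexample.word_mem_lang
      PruneCounterexample.word_not_mem_lang_prunedA).symm⟩
end
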